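/- arXiv:1309.7115 — 3 statements merged into one kernel-verified Lean document; each statement's English description precedes it below -/
import Mathlib

section
/- Let G be a finite group, V an irreducible complex representation of G with character χ, and let z = (1/|G|²) Σ_{a,b ∈ G} a b a⁻¹ b⁻¹, regarded as an element of the group algebra ℂ[G]. Then z acts on V as the scalar 1/χ(1)². -/
/-!
By Schur's lemma an endomorphism of `V` commuting with `G` is the scalar `tr f / χ(1)`.
Summing over `a` first, `∑ₐ a b a⁻¹` acts as `|G| χ(b) / χ(1)`, so `|G|² z` acts as
`(|G| / χ(1)) ∑_b χ(b) ρ(b⁻¹)`; this is again a commuting operator, and its trace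
`∑_b χ(b) χ(b⁻¹) = |G|` is the orthonormality of `χ`.
-/

open CategoryTheory Module

theorem commute_sum_of_mul_eq_mul {R ι : Type*} [Semiring R] [Fintype ι] (x : R) (F : ι → R)
    (e : ι ≃ ι) (h : ∀ i, x * F i = F (e i) * x) : Commute x (∑ i, F i) := by
  rw [Commute, SemiconjBy, Finset.mul_sum, Finset.sum_mul, ← e.sum_comp (F · * x)]
  exact Fintype.sum_congr _ _ h

namespace FDRep

variable {k : Type*} [Field k] {G : Type*} [Group G] (V : FDRep k G)

@[simp]
theorem trace_ρ (g : G) : LinearMap.trace k V (V.ρ g) = V.character g := rfl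

theorem finrank_pos_of_simple [Simple V] : 0 < finrank k V := by
  refine Nat.pos_of_ne_zero fun h ↦ id_nonzero V ?_
  have : Subsingleton V := finrank_zero_iff.mp h
  ext v
  exact Subsingleton.elim _ _

theorem character_one_ne_zero [CharZero k] [Simple V] : V.character 1 ≠ 0 := by
  rw [char_one]
  exact_mod_cast (finrank_pos_of_simple V).ne'

theorem exists_eq_smul_id_of_commute [IsAlgClosed k] [Simple V] (f : Module.End k V)
    (hf : ∀ g, Commute (V.ρ g) f) : ∃ c : k, f = c • LinearMap.id := by
  let F : V ⟶ V :=
    ⟨FGModuleCat.ofHom f, fun g ↦ by ext v; exact (LinearMap.congr_fun (hf g) v).symm⟩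
  obtain ⟨c, hc⟩ := endomorphism_simple_eq_smul_id k F
  refine ⟨c, LinearMap.ext fun v ↦ ?_⟩
  exact (congr_arg (fun φ : V ⟶ V ↦ φ.hom.hom v) hc).symm

theorem eq_trace_div_smul_id_of_commute [IsAlgClosed k] [CharZero k] [Simple V]
    (f : Module.End k V) (hf : ∀ g, Commute (V.ρ g) f) :
    f = (LinearMap.trace k V f / V.character 1) • LinearMap.id := by
  obtain ⟨c, rfl⟩ := exists_eq_smul_id_of_commute V f hf
  rw [map_smul, LinearMap.trace_id, char_one, smul_eq_mul, mul_div_cancel_right₀]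
  exact_mod_cast (finrank_pos_of_simple V).ne'

variable [Fintype G]

theorem sum_conj_eq_smul_id [IsAlgClosed k] [CharZero k] [Simple V] (b : G) :
    ∑ a : G, V.ρ (a * b * a⁻¹) =
      (Fintype.card G * V.character b / V.character 1) • LinearMap.id := by
  refine (eq_trace_div_smul_id_of_commute V _ fun g ↦
    commute_sum_of_mul_eq_mul _ _ (Equiv.mulLeft g) fun a ↦ ?_).trans ?_
  · simp only [Equiv.coe_mulLeft, ← map_mul]
    congr 1
    group
  · simp only [map_sum, trace_ρ, char_conj, Finset.sum_const, Finset.card_univ, nsmul_eq_mul]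

theorem sum_character_mul_character_inv [IsAlgClosed k] [CharZero k] [Simple V] :
    ∑ g : G, V.character g * V.character g⁻¹ = Fintype.card G := by
  have hG : (Fintype.card G : k) ≠ 0 := by exact_mod_cast Fintype.card_ne_zero
  let _ : Invertible (Nat.card G : k) := invertibleOfNonzero (by rwa [Nat.card_eq_fintype_card])
  have := char_orthonormal V V
  rw [if_pos ⟨Iso.refl V⟩, Nat.card_eq_fintype_card, inv_mul_eq_one₀ hG] at this
  exact_mod_cast this.symm

theorem sum_character_smul_inv_eq_smul_id [IsAlgClosed k] [CharZero k] [Simple V] :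
    ∑ b : G, V.character b • V.ρ b⁻¹ = (Fintype.card G / V.character 1) • LinearMap.id := by
  refine (eq_trace_div_smul_id_of_commute V _ fun g ↦
    commute_sum_of_mul_eq_mul _ _ (MulAut.conj g).toEquiv fun b ↦ ?_).trans ?_
  · simp only [MulEquiv.toEquiv_eq_coe, EquivLike.coe_coe, MulAut.conj_apply, char_conj,
      mul_smul_comm, smul_mul_assoc, ← map_mul]
    congr 2
    group
  · simp only [map_sum, map_smul, trace_ρ, smul_eq_mul, sum_character_mul_character_inv]

end FDRep

/-- The extensive commutator `z = (1/|G|²) ∑_{a,b} a b a⁻¹ b⁻¹ ∈ ℂ[G]` acts on an irreducible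
complex representation `V` with character `χ` as the scalar `1 / χ(1)²`. -/
theorem stmt7 (G : Type) [Group G] [Fintype G]
    (V : FDRep ℂ G) (hV : Simple V) :
    (((Fintype.card G : ℂ) ^ 2)⁻¹ • ∑ a : G, ∑ b : G, V.ρ (a * b * a⁻¹ * b⁻¹)) =
      ((V.character 1) ^ 2)⁻¹ • (LinearMap.id : V →ₗ[ℂ] V) := by
  have hG : (Fintype.card G : ℂ) ≠ 0 := by exact_mod_cast Fintype.card_ne_zero
  have hχ := V.character_one_ne_zero
  have sum_fixed_b (b : G) : ∑ a : G, V.ρ (a * b * a⁻¹ * b⁻¹) =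
      (Fintype.card G / V.character 1) • (V.character b • V.ρ b⁻¹) := by
    simp only [map_mul _ (_ * _ * _), ← Finset.sum_mul, V.sum_conj_eq_smul_id, smul_mul_assoc,
      ← Module.End.one_eq_id, one_mul, smul_smul]
    ring_nf
  rw [Finset.sum_comm, Fintype.sum_congr _ _ sum_fixed_b, ← Finset.smul_sum,
    V.sum_character_smul_inv_eq_smul_id, smul_smul, smul_smul]
  congr 1
  field_simp
end

section
/- Let G be a finite group. Define a sequence of probability measures μ_m on G by μ_0(g) = 1/|G| for all g ∈ G (the uniform distribution), and μ_{m+1}(g) = (1/|G|) Σ_{(a,x) ∈ G×G, a x a⁻¹ x⁻¹ = g} μ_m(a) for each g ∈ G (i.e. μ_{m+1} is the distribution of the commutator [A, X] where A ∼ μ_m and X is uniform and independent). Then μ_m(e) → 1 as m → ∞, where e is the identity of G. -/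
/-!
Writing `N = |G|`, the pairs `(a, x)` with `[a, x] = e` include all `(e, x)` and all `(a, a)`.
Hence `μ_{m+1}(e) ≥ (N μ_m(e) + (1 - μ_m(e))) / N`, i.e. the defect `1 - μ_m(e)` shrinks at least
by the factor `1 - 1/N` at every step, so it tends to `0` geometrically.
-/

open Filter Finset Topology
open scoped commutatorElement

theorem tendsto_nhds_zero_of_le_mul {u : ℕ → ℝ} {c : ℝ} (hu : ∀ n, 0 ≤ u n) (hc₀ : 0 ≤ c)
    (hc₁ : c < 1) (h : ∀ n, u (n + 1) ≤ c * u n) : Tendsto u atTop (𝓝 0) := by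
  refine squeeze_zero hu (fun n => le_geom hc₀ n fun k _ => h k) ?_
  simpa using (tendsto_pow_atTop_nhds_zero_of_lt_one hc₀ hc₁).mul_const (u 0)

section CommutatorWalk

variable {G : Type*} [Group G] [Fintype G] [DecidableEq G]

noncomputable def commutatorStep (ν : G → ℝ) (g : G) : ℝ :=
  (1 / Fintype.card G) * ∑ p ∈ univ.filter fun p : G × G => ⁅p.1, p.2⁆ = g, ν p.1

theorem commutatorStep_nonneg {ν : G → ℝ} (hν : ∀ g, 0 ≤ ν g) (g : G) :
    0 ≤ commutatorStep ν g :=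
  mul_nonneg (by positivity) (sum_nonneg fun p _ => hν p.1)

theorem sum_commutatorStep (ν : G → ℝ) : ∑ g, commutatorStep ν g = ∑ g, ν g := by
  have hN : (Fintype.card G : ℝ) ≠ 0 := by positivity
  simp only [commutatorStep, ← mul_sum]
  rw [sum_fiberwise_of_maps_to (fun p _ => mem_univ _) (fun p : G × G => ν p.1),
    Fintype.sum_prod_type]
  simp only [sum_const, card_univ, nsmul_eq_mul, ← mul_sum]
  field_simp

theorem sum_filter_commutator_eq_one (ν : G → ℝ) :
    ∑ p ∈ univ.filter fun p : G × G => ⁅p.1, p.2⁆ = 1, ν p.1 =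
      ∑ a, ν a * #(univ.filter fun x : G => ⁅a, x⁆ = 1) := by
  rw [sum_filter, Fintype.sum_prod_type]
  simp only [← sum_filter, sum_const, nsmul_eq_mul, mul_comm]

theorem one_le_card_filter_commutator_eq_one (a : G) :
    1 ≤ #(univ.filter fun x : G => ⁅a, x⁆ = 1) :=
  card_pos.mpr ⟨a, by simp [commutatorElement_self]⟩

theorem card_filter_commutator_one_left :
    #(univ.filter fun x : G => ⁅(1 : G), x⁆ = 1) = Fintype.card G := by
  simp [commutatorElement_one_left]

theorem le_card_mul_commutatorStep_one {ν : G → ℝ} (hν : ∀ g, 0 ≤ ν g) :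
    ∑ g, ν g + (Fintype.card G - 1) * ν 1 ≤ Fintype.card G * commutatorStep ν 1 := by
  set k : G → ℝ := fun a => #(univ.filter fun x : G => ⁅a, x⁆ = 1)
  have hk : ∀ a, 1 ≤ k a := fun a => Nat.one_le_cast.mpr (one_le_card_filter_commutator_eq_one a)
  have hk₁ : k 1 = Fintype.card G := congrArg Nat.cast card_filter_commutator_one_left
  have hsplit : ∑ a, ν a * k a = ∑ a, ν a + ∑ a, ν a * (k a - 1) := by
    rw [← sum_add_distrib]
    exact sum_congr rfl fun a _ => by ring
  have hcentre : ν 1 * (k 1 - 1) ≤ ∑ a, ν a * (k a - 1) :=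
    single_le_sum (f := fun a => ν a * (k a - 1))
      (fun a _ => mul_nonneg (hν a) (sub_nonneg.mpr (hk a))) (mem_univ 1)
  have hN : (Fintype.card G : ℝ) ≠ 0 := by positivity
  rw [commutatorStep, ← mul_assoc, mul_one_div_cancel hN, one_mul,
    sum_filter_commutator_eq_one, hsplit, ← hk₁]
  linarith

theorem one_sub_commutatorStep_one_le {ν : G → ℝ} (hν : ∀ g, 0 ≤ ν g) (hν₁ : ∑ g, ν g = 1) :
    1 - commutatorStep ν 1 ≤ (1 - 1 / Fintype.card G) * (1 - ν 1) := by
  have hN : (0 : ℝ) < Fintype.card G := by positivity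
  have h := le_card_mul_commutatorStep_one hν
  rw [hν₁] at h
  rw [one_sub_div hN.ne', div_mul_eq_mul_div, le_div_iff₀ hN]
  linarith

end CommutatorWalk

/-- Finite groups are probabilistically nilpotent: starting with the uniform distribution
`μ_0` on a finite group `G`, and letting `μ_{m+1}` be the distribution of the commutator
`[A, X]` with `A ∼ μ_m` and `X` uniform and independent, one has `μ_m(e) → 1`. -/
theorem stmt14 (G : Type*) [Group G] [Fintype G] [DecidableEq G]
    (μ : ℕ → G → ℝ)
    (hμ0 : ∀ g : G, μ 0 g = 1 / Fintype.card G)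
    (hμs : ∀ m (g : G), μ (m + 1) g = (1 / Fintype.card G) *
      ∑ p ∈ Finset.univ.filter fun p : G × G => p.1 * p.2 * p.1⁻¹ * p.2⁻¹ = g, μ m p.1) :
    Tendsto (fun m => μ m 1) atTop (nhds 1) := by
  have hstep : ∀ m, μ (m + 1) = commutatorStep (μ m) := fun m => funext fun g => by
    simp only [hμs, commutatorStep, commutatorElement_def]
  have hprob : ∀ m, (∀ g, 0 ≤ μ m g) ∧ ∑ g, μ m g = 1 := by
    intro m
    induction m with
    | zero => exact ⟨fun g => by rw [hμ0]; positivity, by simp [hμ0]⟩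
    | succ m ih =>
      rw [hstep]
      exact ⟨commutatorStep_nonneg ih.1, (sum_commutatorStep _).trans ih.2⟩
  have hle_one : ∀ m, μ m 1 ≤ 1 := fun m =>
    (hprob m).2 ▸ single_le_sum (fun g _ => (hprob m).1 g) (mem_univ 1)
  have hdefect : Tendsto (fun m => 1 - μ m 1) atTop (𝓝 0) := by
    refine tendsto_nhds_zero_of_le_mul (c := 1 - 1 / Fintype.card G)
      (fun m => sub_nonneg.mpr (hle_one m)) ?_ ?_ fun m => ?_
    · exact sub_nonneg.mpr (div_le_one_of_le₀ (mod_cast Fintype.card_pos) (by positivity))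
    · exact sub_lt_self _ (by positivity)
    · rw [hstep]
      exact one_sub_commutatorStep_one_le (hprob m).1 (hprob m).2
  simpa using (tendsto_const_nhds (x := (1 : ℝ))).sub hdefect
end

section
/- Let G be a finite group. Define central elements of ℂ[G] recursively by γ_0 = Λ = (1/|G|)Σ_{x∈G} x and γ_{m+1} = (1/|G|) Σ_{x∈G, g∈G} c_m(g) · g x g⁻¹ x⁻¹, where γ_m = Σ_{g∈G} c_m(g)·g. Then G is nilpotent if and only if γ_m = 1 (the identity element of ℂ[G]) for some m ≥ 1. -/
/-!
Under the complex order every `γ m` is a probability distribution on `G`: its coefficients are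
nonnegative reals summing to `1`. Since no cancellation can occur, the support of `γ (m + 1)` is
exactly the set of commutators `⁅g, x⁆` with `g` in the support of `γ m`, so the support of `γ m`
is the set of left-normed commutators `⁅⁅g₀, x₁⁆, …, xₘ⁆`, and `γ m = 1` iff that set is `{1}`.
These sets lie in the lower central series, which gives one direction; conversely, if they are
trivial at stage `m + 1`, then the stage-`m` set is central, and nilpotence follows by induction
on `m`, passing to `G ⧸ center G`.
-/

open MonoidAlgebra
open scoped ComplexOrder commutatorElement

def iteratedCommutatorSet (G : Type*) [Group G] : ℕ → Set G
  | 0 => Set.univ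
  | m + 1 => Set.image2 (fun g x : G => ⁅g, x⁆) (iteratedCommutatorSet G m) Set.univ

namespace iteratedCommutatorSet

variable {G : Type*} [Group G]

theorem image_of_surjective {H : Type*} [Group H] {f : G →* H}
    (hf : Function.Surjective f) (m : ℕ) :
    f '' iteratedCommutatorSet G m = iteratedCommutatorSet H m := by
  induction m with
  | zero => exact Set.image_univ_of_surjective hf
  | succ m ih =>
    rw [iteratedCommutatorSet, Set.image_image2_distrib (map_commutatorElement f), ih,
      Set.image_univ_of_surjective hf, iteratedCommutatorSet]

theorem subset_lowerCentralSeries (m : ℕ) :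
    iteratedCommutatorSet G m ⊆ (⊤ : Subgroup G).lowerCentralSeries m := by
  induction m with
  | zero => exact fun _ _ => Subgroup.mem_top _
  | succ m ih =>
    rintro _ ⟨g, hg, x, -, rfl⟩
    exact Subgroup.commutator_mem_commutator (ih hg) (Subgroup.mem_top x)

theorem succ_subset_one {m : ℕ} (h : iteratedCommutatorSet G m ⊆ {1}) :
    iteratedCommutatorSet G (m + 1) ⊆ {1} := by
  rintro _ ⟨g, hg, x, -, rfl⟩
  simp [Set.mem_singleton_iff.mp (h hg)]

theorem subset_center_of_succ_subset_one {m : ℕ} (h : iteratedCommutatorSet G (m + 1) ⊆ {1}) :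
    iteratedCommutatorSet G m ⊆ Subgroup.center G := fun g hg =>
  Subgroup.mem_center_iff.mpr fun x =>
    (commutatorElement_eq_one_iff_commute.mp (h ⟨g, hg, x, Set.mem_univ x, rfl⟩)).symm

end iteratedCommutatorSet

theorem Group.isNilpotent_of_iteratedCommutatorSet_subset_one {G : Type*} [Group G] {m : ℕ}
    (h : iteratedCommutatorSet G m ⊆ {1}) : Group.IsNilpotent G := by
  induction m generalizing G with
  | zero =>
    have : Subsingleton G := ⟨fun a b => (h (Set.mem_univ a)).trans (h (Set.mem_univ b)).symm⟩
    infer_instance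
  | succ m ih =>
    refine Group.of_quotient_center_nilpotent (ih ?_)
    rw [← iteratedCommutatorSet.image_of_surjective (QuotientGroup.mk'_surjective _)]
    rintro _ ⟨g, hg, rfl⟩
    exact (QuotientGroup.eq_one_iff g).mpr
      (iteratedCommutatorSet.subset_center_of_succ_subset_one h hg)

theorem Group.isNilpotent_iff_exists_iteratedCommutatorSet_subset_one {G : Type*} [Group G] :
    Group.IsNilpotent G ↔ ∃ m, iteratedCommutatorSet G m ⊆ {1} := by
  refine ⟨fun hG => ?_, fun ⟨_, h⟩ => isNilpotent_of_iteratedCommutatorSet_subset_one h⟩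
  obtain ⟨n, hn⟩ := Subgroup.nilpotent_iff_lowerCentralSeries.mp hG
  refine ⟨n, fun g hg => ?_⟩
  have := iteratedCommutatorSet.subset_lowerCentralSeries n hg
  rwa [hn, SetLike.mem_coe, Subgroup.mem_bot] at this

namespace MonoidAlgebra

section Field

variable {k G : Type*} [Field k] [Group G] [Fintype G]

theorem eq_one_iff_support_subset_one {a : MonoidAlgebra k G} (ha : ∑ g, a.coeff g = 1) :
    a = 1 ↔ Function.support a.coeff ⊆ {1} := by
  classical
  refine ⟨?_, fun h => ?_⟩
  · rintro rfl g hg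
    by_contra hg1
    exact hg (by simpa [one_def, coeff_single] using Finsupp.single_eq_of_ne hg1)
  · have hzero : ∀ g ≠ 1, a.coeff g = 0 := fun g hg => Function.notMem_support.mp (mt (@h g) hg)
    rw [Finset.sum_eq_single 1 (fun g _ => hzero g) (by simp)] at ha
    ext g
    rw [one_def, coeff_single, Finsupp.single_apply]
    split_ifs with hg
    · rw [← hg, ha]
    · exact hzero g (Ne.symm hg)

noncomputable def commutatorAverage (a : MonoidAlgebra k G) : MonoidAlgebra k G :=
  (Fintype.card G : k)⁻¹ • ∑ x : G, ∑ g : G, a.coeff g • single ⁅g, x⁆ (1 : k)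

theorem coeff_commutatorAverage [DecidableEq G] (a : MonoidAlgebra k G) (h : G) :
    (commutatorAverage a).coeff h =
      (Fintype.card G : k)⁻¹ * ∑ x : G, ∑ g : G, if ⁅g, x⁆ = h then a.coeff g else 0 := by
  simp [commutatorAverage, coeff_sum, coeff_single, Finsupp.single_apply]

theorem sum_coeff_commutatorAverage [CharZero k] (a : MonoidAlgebra k G) :
    ∑ h, (commutatorAverage a).coeff h = ∑ g, a.coeff g := by
  classical
  have hcard : (Fintype.card G : k) ≠ 0 := Nat.cast_ne_zero.mpr Fintype.card_ne_zero
  simp_rw [coeff_commutatorAverage, ← Finset.mul_sum]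
  rw [Finset.sum_comm]
  have hfiber : ∀ y : G, ∑ x, ∑ g, (if ⁅g, y⁆ = x then a.coeff g else 0) = ∑ g, a.coeff g :=
    fun y => by rw [Finset.sum_comm]; simp
  simp only [hfiber, Finset.sum_const, Finset.card_univ, nsmul_eq_mul]
  rw [← mul_assoc, inv_mul_cancel₀ hcard, one_mul]

end Field

section RCLike

variable {k G : Type*} [RCLike k] [Group G] [Fintype G] {a : MonoidAlgebra k G}

theorem coeff_commutatorAverage_nonneg (ha : ∀ g, 0 ≤ a.coeff g) (h : G) :
    0 ≤ (commutatorAverage a).coeff h := by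
  classical
  rw [coeff_commutatorAverage]
  exact mul_nonneg (by positivity)
    (Finset.sum_nonneg fun x _ => Finset.sum_nonneg fun g _ => ite_nonneg (ha g) le_rfl)

theorem support_commutatorAverage (ha : ∀ g, 0 ≤ a.coeff g) :
    Function.support (commutatorAverage a).coeff =
      Set.image2 (fun g x : G => ⁅g, x⁆) (Function.support a.coeff) Set.univ := by
  classical
  ext h
  have hterm : ∀ x g : G, 0 ≤ if ⁅g, x⁆ = h then a.coeff g else 0 :=
    fun x g => ite_nonneg (ha g) le_rfl
  simp only [Function.mem_support, coeff_commutatorAverage, ne_eq, mul_eq_zero, inv_eq_zero,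
    Nat.cast_eq_zero, Fintype.card_ne_zero, false_or, Set.mem_image2, Set.mem_univ, true_and,
    Finset.sum_eq_zero_iff_of_nonneg (fun x _ => Finset.sum_nonneg fun g _ => hterm x g),
    Finset.sum_eq_zero_iff_of_nonneg (fun g _ => hterm _ g), Finset.mem_univ, true_implies,
    ite_eq_right_iff]
  push Not
  exact ⟨fun ⟨x, g, hgx, hg⟩ => ⟨g, hg, x, hgx⟩, fun ⟨g, hg, x, hgx⟩ => ⟨x, g, hgx, hg⟩⟩

end RCLike

end MonoidAlgebra

theorem stmt15_general (G : Type*) [Group G] [Fintype G]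
    (γ : ℕ → MonoidAlgebra ℂ G)
    (hγ0 : γ 0 = (Fintype.card G : ℂ)⁻¹ • ∑ x : G, single x (1 : ℂ))
    (hγs : ∀ m, γ (m + 1) = (Fintype.card G : ℂ)⁻¹ •
      ∑ x : G, ∑ g : G, (γ m).coeff g • single (g * x * g⁻¹ * x⁻¹) (1 : ℂ)) :
    Group.IsNilpotent G ↔ ∃ m : ℕ, 1 ≤ m ∧ γ m = 1 := by
  -- `⁅g, x⁆` unfolds to `g * x * g⁻¹ * x⁻¹`, so this is `hγs` itself
  have hstep : ∀ m, γ (m + 1) = commutatorAverage (γ m) := hγs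
  have hcoeff0 : ∀ g, (γ 0).coeff g = (Fintype.card G : ℂ)⁻¹ := by simp [hγ0]
  have hnonneg : ∀ m g, 0 ≤ (γ m).coeff g := by
    intro m
    induction m with
    | zero => intro g; rw [hcoeff0]; positivity
    | succ m ih => rw [hstep]; exact coeff_commutatorAverage_nonneg ih
  have hmass : ∀ m, ∑ g, (γ m).coeff g = 1 := by
    intro m
    induction m with
    | zero => simp [hcoeff0]
    | succ m ih => rw [hstep, sum_coeff_commutatorAverage, ih]
  have hsupport : ∀ m, Function.support (γ m).coeff = iteratedCommutatorSet G m := by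
    intro m
    induction m with
    | zero => ext g; simp [hcoeff0, iteratedCommutatorSet]
    | succ m ih => rw [hstep, support_commutatorAverage (hnonneg m), ih]; rfl
  simp only [eq_one_iff_support_subset_one (hmass _), hsupport,
    Group.isNilpotent_iff_exists_iteratedCommutatorSet_subset_one]
  exact ⟨fun ⟨m, hm⟩ => ⟨m + 1, Nat.le_add_left 1 m, iteratedCommutatorSet.succ_subset_one hm⟩,
    fun ⟨m, _, hm⟩ => ⟨m, hm⟩⟩

/-- Define central elements of `ℂ[G]` by `γ_0 = Λ = (1/|G|) ∑_x x` and
`γ_{m+1} = (1/|G|) ∑_{x,g} c_m(g) • g x g⁻¹ x⁻¹` where `γ_m = ∑_g c_m(g) • g`.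
Then the finite group `G` is nilpotent iff `γ_m = 1` for some `m ≥ 1`. -/
theorem stmt15 (G : Type*) [Group G] [Fintype G] [DecidableEq G]
    (γ : ℕ → MonoidAlgebra ℂ G)
    (hγ0 : γ 0 = (Fintype.card G : ℂ)⁻¹ • ∑ x : G, single x (1 : ℂ))
    (hγs : ∀ m, γ (m + 1) = (Fintype.card G : ℂ)⁻¹ •
      ∑ x : G, ∑ g : G, (γ m).coeff g • single (g * x * g⁻¹ * x⁻¹) (1 : ℂ)) :
    Group.IsNilpotent G ↔ ∃ m : ℕ, 1 ≤ m ∧ γ m = 1 :=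
  stmt15_general G γ hγ0 hγs
end
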